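/- arXiv:2006.10875 — 2 statements merged into one kernel-verified Lean document; each statement's English description precedes it below -/
import Mathlib

section
/- Let H ≥ 1 be a natural number and define the learning rate α_t = (H+1)/(H+t) for t ≥ 1. For t ≥ i ≥ 1 define α_t^i = α_i · ∏_{j=i+1}^t (1 - α_j). Then for every i ≥ 1, the infinite sum ∑_{t=i}^∞ α_t^i = 1 + 1/H. -/
open Finset

/-- Learning rate α_t = (H+1)/(H+t). -/
noncomputable def lr (H t : ℕ) : ℝ := (H + 1) / (H + t)

/-- α_t^i = α_i · ∏_{j=i+1}^t (1 - α_j). -/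
noncomputable def lrProd (H i t : ℕ) : ℝ :=
  lr H i * ∏ j ∈ Finset.Icc (i + 1) t, (1 - lr H j)

/-- Q H i t = ∏_{j ∈ [i, t)} j/(H+j). -/
noncomputable def Qaux (H i t : ℕ) : ℝ := ∏ j ∈ Finset.Ico i t, ((j : ℝ) / (H + j))

lemma Hj_pos (H j : ℕ) (hH : 1 ≤ H) : (0 : ℝ) < (H : ℝ) + j := by
  have : (1 : ℝ) ≤ (H : ℝ) := by exact_mod_cast hH
  positivity

lemma lrProd_eq (H : ℕ) (hH : 1 ≤ H) (i : ℕ) (hi : 1 ≤ i) :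
    ∀ t, i ≤ t → lrProd H i t = ((H : ℝ) + 1) / (H + t) * Qaux H i t := by
  intro t ht
  induction t with
  | zero => omega
  | succ n ih =>
    rcases Nat.lt_or_ge i (n + 1) with h | h
    · have hn : i ≤ n := by omega
      have hIcc : Finset.Icc (i + 1) (n + 1) = insert (n + 1) (Finset.Icc (i + 1) n) := by
        ext x; simp [Finset.mem_Icc, Finset.mem_insert]; omega
      have hIco : Finset.Ico i (n + 1) = insert n (Finset.Ico i n) := by
        exact Nat.Ico_succ_right_eq_insert_Ico hn
      have e1 : lrProd H i (n + 1) = lrProd H i n * (1 - lr H (n + 1)) := by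
        rw [lrProd, lrProd, hIcc, Finset.prod_insert (by simp), ]
        ring
      have e2 : Qaux H i (n + 1) = Qaux H i n * ((n : ℝ) / (H + n)) := by
        rw [Qaux, Qaux, hIco, Finset.prod_insert (by simp)]
        ring
      rw [e1, ih hn, e2]
      have h1 : (0 : ℝ) < (H : ℝ) + n := Hj_pos H n hH
      have h2 : (0 : ℝ) < (H : ℝ) + (n + 1) := by
        have := Hj_pos H (n + 1) hH; push_cast at this ⊢; linarith
      have hlr : 1 - lr H (n + 1) = (n : ℝ) / (H + (n + 1)) := by
        rw [lr]
        push_cast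
        field_simp
        try ring
      rw [hlr]
      push_cast
      field_simp
      try ring
    · have : i = n + 1 := by omega
      subst this
      rw [lrProd, Qaux, lr]
      simp

lemma Qaux_nonneg (H i t : ℕ) : 0 ≤ Qaux H i t := by
  apply Finset.prod_nonneg
  intro j hj
  positivity

lemma Qaux_le (H : ℕ) (hH : 1 ≤ H) (i t : ℕ) (hi : 1 ≤ i) (ht : i ≤ t) :
    Qaux H i t ≤ (i : ℝ) / t := by
  have key : ∀ t, i ≤ t → Qaux H i t ≤ ∏ j ∈ Finset.Ico i t, ((j : ℝ) / (j + 1)) := by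
    intro t ht
    apply Finset.prod_le_prod
    · intro j hj; positivity
    · intro j hj
      simp only [Finset.mem_Ico] at hj
      have hj1 : 1 ≤ j := le_trans hi hj.1
      have h1 : (0 : ℝ) < (H : ℝ) + j := Hj_pos H j hH
      have h2 : (0 : ℝ) < (j : ℝ) + 1 := by positivity
      rw [div_le_div_iff₀ h1 h2]
      have : (1 : ℝ) ≤ (H : ℝ) := by exact_mod_cast hH
      nlinarith [(Nat.one_le_cast (α := ℝ)).mpr hj1]
  have tele : ∀ t, i ≤ t → ∏ j ∈ Finset.Ico i t, ((j : ℝ) / (j + 1)) = (i : ℝ) / t := by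
    intro t ht
    induction t with
    | zero => exact absurd (hi.trans ht) (by omega)
    | succ n ih =>
      rcases Nat.lt_or_ge i (n + 1) with h | h
      · have hn : i ≤ n := by omega
        have hIco : Finset.Ico i (n + 1) = insert n (Finset.Ico i n) := by
          exact Nat.Ico_succ_right_eq_insert_Ico hn
        rw [hIco, Finset.prod_insert (by simp), ih hn]
        have hn1 : 1 ≤ n := by omega
        have h1 : (0 : ℝ) < (n : ℝ) := by exact_mod_cast hn1
        push_cast
        field_simp
      · have : i = n + 1 := by omega
        subst this
        simp [div_self (show ((n : ℝ) + 1) ≠ 0 by positivity)]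
  calc Qaux H i t ≤ _ := key t ht
    _ = (i : ℝ) / t := tele t ht

theorem stmt0 (H : ℕ) (hH : 1 ≤ H) (i : ℕ) (hi : 1 ≤ i) :
    ∑' t : ℕ, (if i ≤ t then lrProd H i t else 0) = 1 + 1 / (H : ℝ) := by
  have hHpos : (0 : ℝ) < (H : ℝ) := by exact_mod_cast hH
  set f : ℕ → ℝ := fun t => if i ≤ t then lrProd H i t else 0 with hf
  -- f t = ((H+1)/H) * (Qaux t - Qaux (t+1)) for all t
  have key : ∀ t, f t = ((H : ℝ) + 1) / H * (Qaux H i t - Qaux H i (t + 1)) := by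
    intro t
    rcases Nat.lt_or_ge t i with h | h
    · have h0 : f t = 0 := by simp [hf, Nat.not_le.mpr h]
      have e1 : Qaux H i t = 1 := by rw [Qaux, Finset.Ico_eq_empty (by omega)]; simp
      have e2 : Qaux H i (t + 1) = 1 := by rw [Qaux, Finset.Ico_eq_empty (by omega)]; simp
      rw [h0, e1, e2]; ring
    · have h0 : f t = lrProd H i t := by simp [hf, h]
      rw [h0, lrProd_eq H hH i hi t h]
      have hIco : Finset.Ico i (t + 1) = insert t (Finset.Ico i t) := by
        exact Nat.Ico_succ_right_eq_insert_Ico h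
      have e2 : Qaux H i (t + 1) = Qaux H i t * ((t : ℝ) / (H + t)) := by
        rw [Qaux, Qaux, hIco, Finset.prod_insert (by simp)]; ring
      rw [e2]
      have h1 : (0 : ℝ) < (H : ℝ) + t := Hj_pos H t hH
      field_simp
      ring
  have hnn : ∀ t, 0 ≤ f t := by
    intro t
    rw [key t]
    have : Qaux H i (t + 1) ≤ Qaux H i t := by
      rcases Nat.lt_or_ge t i with h | h
      · have e1 : Qaux H i t = 1 := by rw [Qaux, Finset.Ico_eq_empty (by omega)]; simp
        have e2 : Qaux H i (t + 1) = 1 := by rw [Qaux, Finset.Ico_eq_empty (by omega)]; simp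
        rw [e1, e2]
      · have hIco : Finset.Ico i (t + 1) = insert t (Finset.Ico i t) := by
          exact Nat.Ico_succ_right_eq_insert_Ico h
        have e2 : Qaux H i (t + 1) = Qaux H i t * ((t : ℝ) / (H + t)) := by
          rw [Qaux, Qaux, hIco, Finset.prod_insert (by simp)]; ring
        rw [e2]
        have h1 : (0 : ℝ) < (H : ℝ) + t := Hj_pos H t hH
        have := Qaux_nonneg H i t
        nlinarith [div_le_one_of_le₀ (by linarith : (t:ℝ) ≤ (H:ℝ)+t) h1.le,
          div_nonneg (Nat.cast_nonneg t : (0:ℝ) ≤ t) h1.le]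
    have hc : (0:ℝ) ≤ ((H : ℝ) + 1) / H := by positivity
    nlinarith
  have hsum : HasSum f (1 + 1 / (H : ℝ)) := by
    rw [hasSum_iff_tendsto_nat_of_nonneg hnn]
    have hpart : ∀ n, ∑ t ∈ Finset.range n, f t
        = ((H : ℝ) + 1) / H * (1 - Qaux H i n) := by
      intro n
      have : ∑ t ∈ Finset.range n, f t
          = ∑ t ∈ Finset.range n, (((H : ℝ) + 1) / H * (Qaux H i t - Qaux H i (t + 1))) :=
        Finset.sum_congr rfl (fun t _ => key t)
      rw [this, ← Finset.mul_sum, Finset.sum_range_sub' (fun t => Qaux H i t)]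
      have : Qaux H i 0 = 1 := by rw [Qaux, Finset.Ico_eq_empty (by omega)]; simp
      rw [this]
    simp only [hpart]
    have hQ : Filter.Tendsto (fun n => Qaux H i n) Filter.atTop (nhds 0) := by
      have h1 : ∀ᶠ n in Filter.atTop, (0:ℝ) ≤ Qaux H i n :=
        Filter.Eventually.of_forall (fun n => Qaux_nonneg H i n)
      have h2 : ∀ᶠ n in Filter.atTop, Qaux H i n ≤ (i : ℝ) / n := by
        filter_upwards [Filter.eventually_ge_atTop i] with n hn
        exact Qaux_le H hH i n hi hn
      have h3 : Filter.Tendsto (fun n : ℕ => (i : ℝ) / n) Filter.atTop (nhds 0) :=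
        tendsto_const_div_atTop_nhds_zero_nat (i : ℝ)
      exact squeeze_zero' h1 h2 h3
    have := (tendsto_const_nhds (x := (1 : ℝ)) (f := Filter.atTop (α := ℕ))).sub hQ
    have h2 := this.const_mul (((H : ℝ) + 1) / H)
    convert h2 using 2
    field_simp
    simp
  rw [hsum.tsum_eq]
end

section
/- Let H ≥ 1 and define α_t = (H+1)/(H+t) and α_t^i = α_i ∏_{j=i+1}^t (1-α_j). Suppose b(i) = C/√i for a constant C > 0, and β_t = 2∑_{i=1}^t α_t^i b(i). Then β_t ≤ 8C/√t for all t ≥ 1. -/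
open Finset

/-- β_t = 2 ∑_{i=1}^t α_t^i b(i) with b(i) = C/√i. -/
noncomputable def beta (H : ℕ) (C : ℝ) (t : ℕ) : ℝ :=
  2 * ∑ i ∈ Finset.Icc 1 t, lrProd H i t * (C / Real.sqrt i)

lemma key (H t : ℝ) (hH : 1 ≤ H) (ht : 1 ≤ t) :
    (1 - (H+1)/(H+t+1)) * (4 / Real.sqrt t) + (H+1)/(H+t+1) * (1 / Real.sqrt (t+1))
      ≤ 4 / Real.sqrt (t+1) := by
  have ht0 : (0:ℝ) ≤ t := by linarith
  have hs : Real.sqrt t ^ 2 = t := Real.sq_sqrt ht0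
  have hv : Real.sqrt (t+1) ^ 2 = t+1 := Real.sq_sqrt (by linarith)
  have hs1 : (1:ℝ) ≤ Real.sqrt t := by
    have := Real.sqrt_le_sqrt ht; simpa using this
  have hv1 : (1:ℝ) ≤ Real.sqrt (t+1) := by
    have := Real.sqrt_le_sqrt (show (1:ℝ) ≤ t+1 by linarith); simpa using this
  set s := Real.sqrt t
  set v := Real.sqrt (t+1)
  have hs0 : (0:ℝ) < s := by linarith
  have hv0 : (0:ℝ) < v := by linarith
  have hD : (0:ℝ) < H + t + 1 := by linarith
  have h2 : 2*t*v ≤ (2*t+3)*s := by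
    have e2 : (2*t*v)^2 = 4*t^2*(t+1) := by rw [mul_pow, mul_pow, hv]; ring
    have e3 : ((2*t+3)*s)^2 = (2*t+3)^2*t := by rw [mul_pow, hs]
    have h2sq : (2*t*v)^2 ≤ ((2*t+3)*s)^2 := by rw [e2, e3]; nlinarith
    exact le_of_pow_le_pow_left₀ two_ne_zero (by positivity) h2sq
  have e1 : 4/v - ((1 - (H+1)/(H+t+1)) * (4/s) + (H+1)/(H+t+1) * (1/v))
      = ((3*H+4*t+3)*s - 4*t*v)/((H+t+1)*s*v) := by
    field_simp
    ring
  have hnum : 0 ≤ (3*H+4*t+3)*s - 4*t*v := by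
    nlinarith [h2, mul_nonneg (show (0:ℝ) ≤ H-1 by linarith) hs0.le]
  have : 0 ≤ 4/v - ((1 - (H+1)/(H+t+1)) * (4/s) + (H+1)/(H+t+1) * (1/v)) := by
    rw [e1]; positivity
  linarith

lemma aux (H : ℕ) (hH : 1 ≤ H) :
    ∀ t : ℕ, 1 ≤ t →
      ∑ i ∈ Finset.Icc 1 t, lrProd H i t * (1 / Real.sqrt i) ≤ 4 / Real.sqrt t := by
  intro t ht
  induction t, ht using Nat.le_induction with
  | base =>
      have h1 : lr H 1 = 1 := by
        rw [lr, Nat.cast_one]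
        exact div_self (by positivity)
      simp [lrProd, h1]
  | succ t ht ih =>
      have hHt : (0:ℝ) < (H:ℝ) + (t+1) := by positivity
      have hlr_le : lr H (t+1) ≤ 1 := by
        rw [lr, div_le_one (by push_cast; positivity)]
        push_cast
        have : (1:ℝ) ≤ (t:ℝ)+1 := by exact_mod_cast Nat.one_le_iff_ne_zero.mpr (by omega)
        linarith
      have hone : (0:ℝ) ≤ 1 - lr H (t+1) := by linarith
      -- split off the top term
      rw [Finset.sum_Icc_succ_top (by omega : 1 ≤ t+1)]
      -- rewrite lrProd at (t+1)
      have htop : lrProd H (t+1) (t+1) = lr H (t+1) := by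
        simp [lrProd]
      have hsum : ∑ i ∈ Finset.Icc 1 t, lrProd H i (t+1) * (1 / Real.sqrt i)
          = (1 - lr H (t+1)) * ∑ i ∈ Finset.Icc 1 t, lrProd H i t * (1 / Real.sqrt i) := by
        rw [Finset.mul_sum]
        apply Finset.sum_congr rfl
        intro i hi
        have hile : i + 1 ≤ t + 1 := by
          have := (Finset.mem_Icc.mp hi).2; omega
        rw [lrProd, Finset.prod_Icc_succ_top hile, lrProd]
        ring
      rw [hsum, htop]
      have step : (1 - lr H (t+1)) * (∑ i ∈ Finset.Icc 1 t, lrProd H i t * (1 / Real.sqrt i))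
          ≤ (1 - lr H (t+1)) * (4 / Real.sqrt t) :=
        mul_le_mul_of_nonneg_left ih hone
      have hkey := key (H:ℝ) (t:ℝ) (by exact_mod_cast hH) (by exact_mod_cast ht)
      have hlr_eq : lr H (t+1) = ((H:ℝ)+1)/((H:ℝ)+(t:ℝ)+1) := by
        rw [lr]; push_cast; ring_nf
      rw [hlr_eq]
      rw [hlr_eq] at step
      push_cast
      linarith [step, hkey]

theorem stmt16 (H : ℕ) (hH : 1 ≤ H) (C : ℝ) (hC : 0 < C) :
    ∀ t : ℕ, 1 ≤ t → beta H C t ≤ 8 * C / Real.sqrt t := by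
  intro t ht
  have h := aux H hH t ht
  have hb : beta H C t = 2 * C * ∑ i ∈ Finset.Icc 1 t, lrProd H i t * (1 / Real.sqrt i) := by
    simp only [beta, Finset.mul_sum]
    apply Finset.sum_congr rfl
    intro i _
    ring
  rw [hb]
  have h2 : 2 * C * (∑ i ∈ Finset.Icc 1 t, lrProd H i t * (1 / Real.sqrt i))
      ≤ 2 * C * (4 / Real.sqrt t) :=
    mul_le_mul_of_nonneg_left h (by positivity)
  calc 2 * C * (∑ i ∈ Finset.Icc 1 t, lrProd H i t * (1 / Real.sqrt i))
      ≤ 2 * C * (4 / Real.sqrt t) := h2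
    _ = 8 * C / Real.sqrt t := by ring
end
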